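/- arXiv:1409.5931 — 9 statements merged into one kernel-verified Lean document; each statement's English description precedes it below -/
import Mathlib

section
/- Let n be divisible by k, let V = X ∪ Y be a partition with n/k − |X| odd, and let H be the k-graph on V whose edges are all k-subsets intersecting X in an odd number of vertices. Then H has no perfect matching. -/
/-!
Each edge of a perfect matching `M` has `k` vertices, so `|M| = n / k`; each edge meets `X` in
an odd number of vertices and the edges partition `V`, so `|X| ≡ |M| (mod 2)`. Hence
`n / k - |X|` is even.
-/

namespace Finset

variable {α : Type*} [DecidableEq α] {M : Finset (Finset α)}

theorem card_biUnion_id_of_card_eq {k : ℕ} (hdisj : (M : Set (Finset α)).PairwiseDisjoint id)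
    (hcard : ∀ e ∈ M, e.card = k) : (M.biUnion id).card = M.card * k := by
  rw [card_biUnion hdisj]
  simp only [id]
  rw [sum_congr rfl hcard, sum_const, smul_eq_mul]

theorem card_biUnion_id_inter_modEq_two {X : Finset α}
    (hdisj : (M : Set (Finset α)).PairwiseDisjoint id) (hodd : ∀ e ∈ M, Odd (e ∩ X).card) :
    (M.biUnion id ∩ X).card ≡ M.card [MOD 2] := by
  have hdisjX : (M : Set (Finset α)).PairwiseDisjoint (id · ∩ X) := fun e he f hf hef =>
    (hdisj he hf hef).mono inter_subset_left inter_subset_left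
  rw [biUnion_inter, card_biUnion hdisjX]
  simp only [id]
  rw [Nat.ModEq, sum_nat_mod, sum_congr rfl fun e he => Nat.odd_iff.1 (hodd e he), sum_const,
    smul_eq_mul, mul_one]

end Finset

theorem stmt_3_general {V : Type*} [Fintype V] [DecidableEq V] (k n : ℕ) (hk : 0 < k)
    (hn : Fintype.card V = n) (X : Finset V)
    (hodd : Odd ((n : ℤ) / (k : ℤ) - (X.card : ℤ)))
    (M : Finset (Finset V))
    (hedge : ∀ e ∈ M, e.card = k ∧ Odd (e ∩ X).card)
    (hdisj : (M : Set (Finset V)).Pairwise fun e f => Disjoint e f) :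
    M.biUnion id ≠ Finset.univ := by
  intro hcover
  have hMk : n = M.card * k := by
    rw [← hn, ← Finset.card_univ, ← hcover]
    exact Finset.card_biUnion_id_of_card_eq hdisj fun e he => (hedge e he).1
  have hX : X.card % 2 = M.card % 2 := by
    simpa [hcover, Nat.ModEq] using
      Finset.card_biUnion_id_inter_modEq_two hdisj fun e he => (hedge e he).2
  have hquot : (n : ℤ) / k = M.card := by
    rw [hMk, Nat.cast_mul]
    exact Int.mul_ediv_cancel _ (by exact_mod_cast hk.ne')
  rw [hquot, Int.odd_iff] at hodd
  omega

/-- Parity divisibility barrier: if `n/k - |X|` is odd and every edge meets `X` in an odd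
number of vertices, there is no perfect matching. -/
theorem stmt_3 {V : Type*} [Fintype V] [DecidableEq V] (k n : ℕ) (hk : 0 < k) (hkn : k ∣ n)
    (hn : Fintype.card V = n) (X : Finset V)
    (hodd : Odd ((n : ℤ) / (k : ℤ) - (X.card : ℤ)))
    (M : Finset (Finset V))
    (hedge : ∀ e ∈ M, e.card = k ∧ Odd (e ∩ X).card)
    (hdisj : (M : Set (Finset V)).Pairwise fun e f => Disjoint e f) :
    M.biUnion id ≠ Finset.univ :=
  stmt_3_general k n hk hn X hodd M hedge hdisj
end

section
/- Let k ≥ 2 and let L_odd ⊆ ℤ² be the subgroup generated by all vectors (a, k−a) with a odd, 0 ≤ a ≤ k. Then L_odd is transferral-free, i.e., (1, −1) ∉ L_odd. -/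
/-- The lattice generated by all `k`-vectors `(a, k-a)` with `a` odd. -/
def Lodd (k : ℕ) : AddSubgroup (ℤ × ℤ) :=
  AddSubgroup.closure {p : ℤ × ℤ | ∃ a : ℕ, a ≤ k ∧ Odd a ∧ p = ((a : ℤ), (k : ℤ) - (a : ℤ))}

/-- Sends `(a, k - a)` to `k (a + 1)`, which vanishes mod `2k` exactly when `a` is odd. -/
def oddWeightMod (k : ℕ) : ℤ × ℤ →+ ZMod (2 * k) :=
  AddMonoidHom.mk' (fun p => (((k + 1) * p.1 + p.2 : ℤ) : ZMod (2 * k))) fun p q => by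
    simp only [Prod.fst_add, Prod.snd_add]
    push_cast
    ring

theorem Lodd_le_ker_oddWeightMod (k : ℕ) : Lodd k ≤ (oddWeightMod k).ker := by
  refine (AddSubgroup.closure_le _).mpr ?_
  rintro _ ⟨a, -, ⟨m, rfl⟩, rfl⟩
  have hval : ((k + 1) * ((2 * m + 1 : ℕ) : ℤ) + ((k : ℤ) - (2 * m + 1 : ℕ)))
      = ((2 * k : ℕ) : ℤ) * (m + 1) := by
    push_cast
    ring
  simp only [SetLike.mem_coe, AddMonoidHom.mem_ker, oddWeightMod, AddMonoidHom.mk'_apply]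
  rw [hval, Int.cast_mul, Int.cast_natCast, ZMod.natCast_self, zero_mul]

theorem oddWeightMod_transferral (k : ℕ) : oddWeightMod k (1, -1) = k := by
  simp [oddWeightMod]

theorem natCast_ne_zero_zmod_two_mul {k : ℕ} (hk : k ≠ 0) : (k : ZMod (2 * k)) ≠ 0 := by
  rw [Ne, ZMod.natCast_eq_zero_iff]
  intro h
  have := Nat.le_of_dvd (Nat.pos_of_ne_zero hk) h
  omega

/-- `L_odd` is transferral-free: `(1, -1) ∉ L_odd`. -/
theorem stmt_5 (k : ℕ) (hk : 2 ≤ k) : ((1 : ℤ), (-1 : ℤ)) ∉ Lodd k := fun h => by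
  have hzero : oddWeightMod k (1, -1) = 0 := Lodd_le_ker_oddWeightMod k h
  rw [oddWeightMod_transferral] at hzero
  exact natCast_ne_zero_zmod_two_mul (by omega) hzero
end

section
/- Let H be a k-graph on n vertices with δ_{k−1}(H) ≥ (1/k − γ)n, and let α > 0. For any vertex v, the number of vertices u such that |N_H(u) ∩ N_H(v)| ≥ α n^{k−1} is at least (1/k − γ − 2·k!·α)·n. -/
open Finset

lemma lemA_7 {V : Type} [Fintype V] [DecidableEq V] {k : ℕ} (hk : 1 ≤ k)
    (H : Finset (Finset V)) (hH : ∀ e ∈ H, e.card = k)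
    {S : Finset V} (hS : S.card = k - 1) :
    (univ.filter (fun u => u ∉ S ∧ insert u S ∈ H)).card
      = (H.filter (fun e => S ⊆ e)).card := by
  apply card_bij (fun u _ => insert u S)
  · intro u hu
    simp only [mem_filter, mem_univ, true_and] at hu
    exact mem_filter.2 ⟨hu.2, subset_insert u S⟩
  · intro a ha b hb h
    simp only [mem_filter, mem_univ, true_and] at ha hb
    have : a ∈ insert b S := h ▸ mem_insert_self a S
    rcases mem_insert.1 this with h' | h'
    · exact h'
    · exact absurd h' ha.1
  · intro e he
    simp only [mem_filter] at he
    have hcard : (e \ S).card = 1 := by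
      rw [card_sdiff_of_subset he.2, hH e he.1, hS]; omega
    obtain ⟨u, hu⟩ := card_eq_one.1 hcard
    have hu' : u ∈ e \ S := hu ▸ mem_singleton_self u
    have humem := mem_sdiff.1 hu'
    have heq : insert u S = e := by
      rw [insert_eq, ← hu, sdiff_union_of_subset he.2]
    refine ⟨u, ?_, heq⟩
    simp only [mem_filter, mem_univ, true_and]
    exact ⟨humem.2, heq ▸ he.1⟩

lemma lemNv_7 {V : Type} [Fintype V] [DecidableEq V] {k : ℕ}
    (H : Finset (Finset V)) (hH : ∀ e ∈ H, e.card = k) (v : V) :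
    ((univ.powersetCard (k-1)).filter (fun S => v ∉ S ∧ insert v S ∈ H)).card
      = (H.filter (fun e => v ∈ e)).card := by
  apply card_bij (fun S _ => insert v S)
  · intro S hS
    simp only [mem_filter] at hS
    exact mem_filter.2 ⟨hS.2.2, mem_insert_self v S⟩
  · intro a ha b hb h
    simp only [mem_filter] at ha hb
    have := congrArg (Finset.erase · v) h
    simpa [Finset.erase_insert ha.2.1, Finset.erase_insert hb.2.1] using this
  · intro e he
    simp only [mem_filter] at he
    refine ⟨e.erase v, ?_, insert_erase he.2⟩
    simp only [mem_filter, mem_powersetCard]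
    refine ⟨⟨subset_univ _, ?_⟩, notMem_erase v e, by rw [insert_erase he.2]; exact he.1⟩
    rw [card_erase_of_mem he.2, hH e he.1]

lemma lemB_7 {V : Type} [Fintype V] [DecidableEq V] {k : ℕ} (hk : 2 ≤ k)
    (H : Finset (Finset V)) (hH : ∀ e ∈ H, e.card = k) (v : V) :
    ∑ T ∈ (univ.erase v).powersetCard (k-2), (H.filter (fun e => insert v T ⊆ e)).card
      = (k-1) * (H.filter (fun e => v ∈ e)).card := by
  have h1 : ∀ T : Finset V, (H.filter (fun e => insert v T ⊆ e)).card
      = ∑ e ∈ H, if insert v T ⊆ e then 1 else 0 := by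
    intro T; rw [sum_boole, Nat.cast_id]
  simp_rw [h1]
  rw [Finset.sum_comm]
  have h2 : ∀ e ∈ H, (∑ T ∈ (univ.erase v).powersetCard (k-2),
      if insert v T ⊆ e then 1 else 0) = if v ∈ e then k-1 else 0 := by
    intro e he
    rw [sum_boole, Nat.cast_id]
    by_cases hv : v ∈ e
    · rw [if_pos hv]
      have heq : ((univ.erase v).powersetCard (k-2)).filter (fun T => insert v T ⊆ e)
          = (e.erase v).powersetCard (k-2) := by
        ext T
        simp only [mem_filter, mem_powersetCard, insert_subset_iff, subset_erase,
          subset_univ, true_and]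
        constructor
        · rintro ⟨⟨hTv, hTc⟩, _, hTe⟩
          exact ⟨⟨hTe, hTv⟩, hTc⟩
        · rintro ⟨⟨hTe, hTv⟩, hTc⟩
          exact ⟨⟨hTv, hTc⟩, hv, hTe⟩
      rw [heq, card_powersetCard, card_erase_of_mem hv, hH e he]
      rw [← Nat.choose_symm (show k - 2 ≤ k - 1 by omega)]
      have h4 : k - 1 - (k - 2) = 1 := by omega
      rw [h4, Nat.choose_one_right]
    · rw [if_neg hv]
      rw [Finset.card_eq_zero, filter_eq_empty_iff]
      intro T _ hsub
      exact hv (hsub (mem_insert_self v T))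
  rw [Finset.sum_congr rfl h2, ← Finset.sum_filter, Finset.sum_const, smul_eq_mul, mul_comm]

lemma lemC_7 {V : Type} [Fintype V] [DecidableEq V] {k : ℕ}
    (H : Finset (Finset V)) (v : V) :
    ∑ u : V, ((univ.powersetCard (k-1)).filter (fun S => u ∉ S ∧ insert u S ∈ H) ∩
              (univ.powersetCard (k-1)).filter (fun S => v ∉ S ∧ insert v S ∈ H)).card
      = ∑ S ∈ (univ.powersetCard (k-1)).filter (fun S => v ∉ S ∧ insert v S ∈ H),
          (univ.filter (fun u => u ∉ S ∧ insert u S ∈ H)).card := by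
  set Nv := (univ.powersetCard (k-1)).filter (fun S => v ∉ S ∧ insert v S ∈ H) with hNv
  have h1 : ∀ u : V, ((univ.powersetCard (k-1)).filter (fun S => u ∉ S ∧ insert u S ∈ H)
      ∩ Nv).card = ∑ S ∈ Nv, if u ∉ S ∧ insert u S ∈ H then 1 else 0 := by
    intro u
    rw [sum_boole, Nat.cast_id]
    congr 1
    rw [inter_comm, ← filter_mem_eq_inter]
    apply filter_congr
    intro S hS
    rw [hNv, mem_filter] at hS
    simp only [mem_filter, mem_powersetCard] at hS ⊢
    tauto
  simp_rw [h1]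
  rw [Finset.sum_comm]
  apply Finset.sum_congr rfl
  intro S _
  rw [sum_boole, Nat.cast_id]


private lemma auxfrac_7 (K c ε nn : ℝ)
    (hKc : K * c ≤ 1) (h2Kc : 2 * K * c = 1 + 2 * K * ε)
    (hd0 : 0 ≤ K^2/nn) (hdle : K^2/nn ≤ K * ε) :
    1 ≤ 2 * K * c * (1 - K^2/nn) := by
  have e : 2*K*c*(1 - K^2/nn) = 2*K*c - 2*(K*c*(K^2/nn)) := by ring
  have h7 : K*c*(K^2/nn) ≤ 1*(K^2/nn) := mul_le_mul_of_nonneg_right hKc hd0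
  linarith [h2Kc, hdle, h7, e]

private lemma auxstep_7 (A C K c nn : ℝ)
    (h3 : A * (1 - K^2/nn) * (2*K*c*nn) ≤ C * (2*K*c*nn))
    (h4 : A * nn * 1 ≤ A * nn * (2*K*c*(1-K^2/nn))) :
    A * nn ≤ 2 * K * (C * (c * nn)) := by
  linarith [h3, h4]


private lemma auxfinal_7 (c F α nn Nvc Dc : ℝ) (hNv0 : 0 < Nvc)
    (main : Nvc * (c * nn) ≤ Dc * Nvc + α * nn * (2 * F * Nvc)) :
    (c - 2 * F * α) * nn ≤ Dc := by
  nlinarith [main, hNv0]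

/-- Proposition 3.5: for any vertex `v`, the number of vertices `u` with
`|N_H(u) ∩ N_H(v)| ≥ α n^{k-1}` is at least `(1/k - γ - 2·k!·α)·n`. -/
theorem stmt_7 (k : ℕ) (hk : 2 ≤ k) (γ α : ℝ) (hγ0 : 0 < γ)
    (hγ : γ < 1 / (2 * (k : ℝ))) (hα : 0 < α) :
    ∃ n₀ : ℕ, ∀ (V : Type) [Fintype V] [DecidableEq V], ∀ n : ℕ, n₀ ≤ n →
      Fintype.card V = n →
      ∀ H : Finset (Finset V), (∀ e ∈ H, e.card = k) →
      (∀ S : Finset V, S.card = k - 1 →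
        (1 / (k : ℝ) - γ) * n ≤ ((H.filter (fun e => S ⊆ e)).card : ℝ)) →
      ∀ v : V,
        (1 / (k : ℝ) - γ - 2 * (Nat.factorial k : ℝ) * α) * n ≤
          (((Finset.univ : Finset V).filter (fun u =>
            α * (n : ℝ) ^ (k - 1) ≤
              (((((Finset.univ : Finset V).powersetCard (k - 1)).filter
                    (fun S => u ∉ S ∧ insert u S ∈ H)) ∩
                (((Finset.univ : Finset V).powersetCard (k - 1)).filter
                    (fun S => v ∉ S ∧ insert v S ∈ H))).card : ℝ))).card : ℝ) := by
  set K : ℝ := (k : ℝ) with hK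
  have hK2 : (2:ℝ) ≤ K := by rw [hK]; exact_mod_cast hk
  have hK0 : (0:ℝ) < K := by linarith
  set ε : ℝ := 1/(2*K) - γ with hε
  have hε0 : 0 < ε := by simp only [hε]; linarith
  refine ⟨k + 1 + ⌈K/ε⌉₊, ?_⟩
  intro V _ _ n hn hcardV H hH hdeg v
  set c : ℝ := 1/K - γ with hc
  have hc0 : 0 < c := by
    have : 1/(2*K) < 1/K := by
      apply div_lt_div_of_pos_left one_pos hK0; linarith
    simp only [hc]; linarith
  have hkn : k + 1 ≤ n := by omega
  have hn0 : (0:ℝ) < n := by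
    have : 0 < n := by omega
    exact_mod_cast this
  have hKn : K ≤ ε * n := by
    have h1 : K/ε ≤ (⌈K/ε⌉₊ : ℝ) := Nat.le_ceil _
    have h2 : ((⌈K/ε⌉₊ : ℕ) : ℝ) ≤ (n:ℝ) := by
      have : ⌈K/ε⌉₊ ≤ n := by omega
      exact_mod_cast this
    have := le_trans h1 h2
    rw [div_le_iff₀ hε0] at this
    linarith [this]
  set m : ℕ := k - 2 with hm
  set Nv := ((univ : Finset V).powersetCard (k-1)).filter
      (fun S => v ∉ S ∧ insert v S ∈ H) with hNvdef
  set Nvc : ℝ := (Nv.card : ℝ) with hNvc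
  -- Step 1: choose(n-1,k-2) * (c*n) ≤ (k-1) * Nvc
  have step1 : (((n-1).choose m : ℕ) : ℝ) * (c * n) ≤ ((k:ℝ) - 1) * Nvc := by
    have hsum := lemB_7 hk H hH v
    have hNveq := lemNv_7 H hH v
    have hlow : ((univ.erase v).powersetCard m).card • (c * n) ≤
        ∑ T ∈ (univ.erase v).powersetCard m,
          ((H.filter (fun e => insert v T ⊆ e)).card : ℝ) := by
      apply Finset.card_nsmul_le_sum
      intro T hT
      rw [mem_powersetCard] at hT
      have hvT : v ∉ T := fun hvv => (Finset.notMem_erase v univ) (hT.1 hvv)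
      have : (insert v T).card = k - 1 := by
        rw [card_insert_of_notMem hvT, hT.2]; omega
      exact hdeg _ this
    have hcard : ((univ.erase v).powersetCard m).card = (n-1).choose m := by
      rw [card_powersetCard, card_erase_of_mem (mem_univ v), card_univ, hcardV]
    have hsum' : ∑ T ∈ (univ.erase v).powersetCard m,
        ((H.filter (fun e => insert v T ⊆ e)).card : ℝ)
        = ((k-1) * (H.filter (fun e => v ∈ e)).card : ℕ) := by
      rw [← hsum]; push_cast; rw [hm]
    rw [hcard] at hlow
    rw [hsum'] at hlow
    rw [nsmul_eq_mul] at hlow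
    calc (((n-1).choose m : ℕ) : ℝ) * (c * n) ≤
        (((k-1) * (H.filter (fun e => v ∈ e)).card : ℕ) : ℝ) := hlow
      _ = ((k:ℝ) - 1) * Nvc := by
          rw [hNvc, hNvdef, ← hNveq]; push_cast [Nat.cast_sub (by omega : 1 ≤ k)]; ring
  -- Step 2: (n-k)^m ≤ (k-2)! * choose(n-1,m)
  have step2 : (((n-k:ℕ)) : ℝ)^m ≤ ((m.factorial : ℕ) : ℝ) * (((n-1).choose m : ℕ) : ℝ) := by
    have h1 : (n - k)^m ≤ (n-1).descFactorial m := by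
      calc (n-k)^m ≤ (n - 1 + 1 - m)^m := by
            apply Nat.pow_le_pow_left; omega
        _ ≤ (n-1).descFactorial m := Nat.pow_sub_le_descFactorial _ _
    rw [Nat.descFactorial_eq_factorial_mul_choose] at h1
    exact_mod_cast h1
  -- Step 3: n^m * (1 - K^2/n) ≤ (n - K)^m and cast (n-k : ℕ) = n - K
  have hnk : (((n-k:ℕ)):ℝ) = (n:ℝ) - K := by
    rw [hK]; push_cast [Nat.cast_sub (by omega : k ≤ n)]; ring
  have step3 : (n:ℝ)^m * (1 - K^2/n) ≤ ((n:ℝ) - K)^m := by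
    have hber : 1 + (m:ℝ) * (-(K/n)) ≤ (1 + (-(K/n)))^m := by
      apply one_add_mul_le_pow
      have : K/n ≤ 1 := by
        rw [div_le_one hn0]
        have : (k:ℝ) ≤ (n:ℝ) := by exact_mod_cast (by omega : k ≤ n)
        linarith
      linarith
    have e1 : (n:ℝ) * (1 + (-(K/n))) = (n:ℝ) - K := by field_simp; ring
    have e2 : (n:ℝ)^m * (1 + (-(K/n)))^m = ((n:ℝ) - K)^m := by
      rw [← mul_pow, e1]
    have hmK : (m:ℝ) ≤ K := by
      rw [hK]; exact_mod_cast (by omega : m ≤ k)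
    have hB : 1 - K^2/n ≤ 1 + (m:ℝ) * (-(K/n)) := by
      have h1 : (m:ℝ) * (K/n) ≤ K * (K/n) := by
        apply mul_le_mul_of_nonneg_right hmK
        positivity
      have h2 : K * (K/n) = K^2/n := by ring
      linarith
    calc (n:ℝ)^m * (1 - K^2/n) ≤ (n:ℝ)^m * (1 + (m:ℝ) * (-(K/n))) := by
          apply mul_le_mul_of_nonneg_left hB; positivity
      _ ≤ (n:ℝ)^m * (1 + (-(K/n)))^m := by
          apply mul_le_mul_of_nonneg_left hber; positivity
      _ = ((n:ℝ) - K)^m := e2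
  -- the fraction bound
  have hKc : K * c ≤ 1 := by
    rw [hc]
    have h1 : K * (1/K) = 1 := by field_simp
    have h2 : K * (1/K - γ) = K * (1/K) - K * γ := by ring
    nlinarith [mul_nonneg hK0.le hγ0.le]
  have h2Kc : 2 * K * c = 1 + 2 * K * ε := by
    rw [hc, hε]; field_simp; ring
  have hfrac : 1 ≤ 2 * K * c * (1 - K^2/n) := by
    have hd0 : 0 ≤ K^2/n := by positivity
    have hdle : K^2/n ≤ K * ε := by
      rw [div_le_iff₀ hn0]
      nlinarith [mul_le_mul_of_nonneg_left hKn hK0.le]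
    exact auxfrac_7 K c ε (n:ℝ) hKc h2Kc hd0 hdle
  -- key: n^(k-1) ≤ 2 * k! * Nvc
  have hfact : K * (((k-1).factorial : ℕ):ℝ) = ((k.factorial : ℕ):ℝ) := by
    have : k.factorial = k * (k-1).factorial := by
      conv_lhs => rw [show k = (k-1) + 1 by omega]
      rw [Nat.factorial_succ]
      congr 1; omega
    rw [this]; push_cast; ring
  have hfact2 : ((k:ℝ) - 1) * ((m.factorial : ℕ):ℝ) = (((k-1).factorial : ℕ):ℝ) := by
    have : (k-1).factorial = (k-1) * m.factorial := by
      conv_lhs => rw [show k - 1 = m + 1 by omega]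
      rw [Nat.factorial_succ]
      congr 1
      omega
    rw [this]; push_cast [Nat.cast_sub (by omega : 1 ≤ k)]; ring
  have key : (n:ℝ)^(k-1) ≤ 2 * ((k.factorial : ℕ):ℝ) * Nvc := by
    have hchain : ((n:ℝ) - K)^m * (c * n) ≤ (((k-1).factorial : ℕ):ℝ) * Nvc := by
      have h1 : ((n:ℝ) - K)^m * (c * n) ≤
          (((m.factorial:ℕ)):ℝ) * (((n-1).choose m : ℕ) : ℝ) * (c * n) := by
        apply mul_le_mul_of_nonneg_right _ (by positivity)
        rw [← hnk]; exact step2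
      have h2 : (((m.factorial:ℕ)):ℝ) * (((n-1).choose m : ℕ) : ℝ) * (c * n) ≤
          (((m.factorial:ℕ)):ℝ) * (((k:ℝ) - 1) * Nvc) := by
        rw [mul_assoc]
        apply mul_le_mul_of_nonneg_left step1 (by positivity)
      calc ((n:ℝ) - K)^m * (c * n) ≤
            (((m.factorial:ℕ)):ℝ) * (((k:ℝ) - 1) * Nvc) := le_trans h1 h2
        _ = (((k-1).factorial : ℕ):ℝ) * Nvc := by rw [← hfact2]; ring
    have hpow : (n:ℝ)^(k-1) = (n:ℝ)^m * n := by
      rw [← pow_succ]; congr 1; omega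
    have hstep : (n:ℝ)^m * n ≤ 2 * K * (((n:ℝ) - K)^m * (c * n)) := by
      have h3 : (n:ℝ)^m * (1 - K^2/n) * (2 * K * c * n) ≤
          ((n:ℝ) - K)^m * (2 * K * c * n) := by
        apply mul_le_mul_of_nonneg_right step3
        positivity
      have h4 : (n:ℝ)^m * n * 1 ≤ (n:ℝ)^m * n * (2*K*c*(1-K^2/n)) :=
        mul_le_mul_of_nonneg_left hfrac (by positivity)
      exact auxstep_7 ((n:ℝ)^m) (((n:ℝ)-K)^m) K c (n:ℝ) h3 h4
    calc (n:ℝ)^(k-1) = (n:ℝ)^m * n := hpow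
      _ ≤ 2 * K * (((n:ℝ) - K)^m * (c * n)) := hstep
      _ ≤ 2 * K * ((((k-1).factorial : ℕ):ℝ) * Nvc) := by
          apply mul_le_mul_of_nonneg_left hchain (by positivity)
      _ = 2 * ((k.factorial : ℕ):ℝ) * Nvc := by rw [← hfact]; ring
  -- final double counting
  have hcount : ∑ u : V, ((((univ.powersetCard (k - 1)).filter
        (fun S => u ∉ S ∧ insert u S ∈ H)) ∩ Nv).card : ℝ)
      = ∑ S ∈ Nv, ((H.filter (fun e => S ⊆ e)).card : ℝ) := by
    have h0 := lemC_7 (k := k) H v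
    have h1 : ∑ S ∈ ((univ : Finset V).powersetCard (k-1)).filter
          (fun S => v ∉ S ∧ insert v S ∈ H),
        ((univ : Finset V).filter (fun u => u ∉ S ∧ insert u S ∈ H)).card
        = ∑ S ∈ ((univ : Finset V).powersetCard (k-1)).filter
          (fun S => v ∉ S ∧ insert v S ∈ H), (H.filter (fun e => S ⊆ e)).card := by
      apply Finset.sum_congr rfl
      intro S hS
      rw [mem_filter, mem_powersetCard] at hS
      exact lemA_7 (by omega) H hH hS.1.2
    rw [hNvdef]
    exact_mod_cast h0.trans h1
  have hlow2 : Nvc * (c * n) ≤ ∑ S ∈ Nv, ((H.filter (fun e => S ⊆ e)).card : ℝ) := by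
    have h2 : ∀ S ∈ Nv, c * (n:ℝ) ≤ ((H.filter (fun e => S ⊆ e)).card : ℝ) := by
      intro S hS
      rw [hNvdef, mem_filter, mem_powersetCard] at hS
      exact hdeg S hS.1.2
    have := Finset.card_nsmul_le_sum Nv
      (fun S => ((H.filter (fun e => S ⊆ e)).card : ℝ)) (c * n) h2
    rwa [nsmul_eq_mul] at this
  have hup : ∑ u : V, ((((univ.powersetCard (k - 1)).filter
        (fun S => u ∉ S ∧ insert u S ∈ H)) ∩ Nv).card : ℝ)
      ≤ ((Finset.univ.filter (fun u => α * (n : ℝ) ^ (k - 1) ≤ ((((univ.powersetCard (k - 1)).filter (fun S => u ∉ S ∧ insert u S ∈ H)) ∩ Nv).card : ℝ))).card : ℝ) * Nvc + (n:ℝ) * (α * (n:ℝ)^(k-1)) := by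
    rw [← Finset.sum_filter_add_sum_filter_not univ (fun u => α * (n : ℝ) ^ (k - 1) ≤ ((((univ.powersetCard (k - 1)).filter (fun S => u ∉ S ∧ insert u S ∈ H)) ∩ Nv).card : ℝ)) (fun u => ((((univ.powersetCard (k - 1)).filter (fun S => u ∉ S ∧ insert u S ∈ H)) ∩ Nv).card : ℝ))]
    apply add_le_add
    · have h3 := Finset.sum_le_card_nsmul (Finset.univ.filter (fun u => α * (n : ℝ) ^ (k - 1) ≤ ((((univ.powersetCard (k - 1)).filter (fun S => u ∉ S ∧ insert u S ∈ H)) ∩ Nv).card : ℝ))) (fun u => ((((univ.powersetCard (k - 1)).filter (fun S => u ∉ S ∧ insert u S ∈ H)) ∩ Nv).card : ℝ)) Nvc ?_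
      · rw [nsmul_eq_mul] at h3
        exact h3
      · intro u _
        rw [hNvc]
        exact_mod_cast Finset.card_le_card Finset.inter_subset_right
    · have h4 := Finset.sum_le_card_nsmul (Finset.univ.filter (fun u => ¬ (α * (n : ℝ) ^ (k - 1) ≤ ((((univ.powersetCard (k - 1)).filter (fun S => u ∉ S ∧ insert u S ∈ H)) ∩ Nv).card : ℝ)))) (fun u => ((((univ.powersetCard (k - 1)).filter (fun S => u ∉ S ∧ insert u S ∈ H)) ∩ Nv).card : ℝ)) (α * (n:ℝ)^(k-1)) ?_
      · rw [nsmul_eq_mul] at h4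
        refine h4.trans ?_
        apply mul_le_mul_of_nonneg_right _ (by positivity)
        have h5 : (Finset.univ.filter (fun u => ¬ (α * (n : ℝ) ^ (k - 1) ≤ ((((univ.powersetCard (k - 1)).filter (fun S => u ∉ S ∧ insert u S ∈ H)) ∩ Nv).card : ℝ)))).card ≤ n := by
          calc _ ≤ (univ : Finset V).card := Finset.card_filter_le _ _
            _ = n := by rw [card_univ, hcardV]
        exact_mod_cast h5
      · intro u hu
        rw [mem_filter] at hu
        exact (not_le.1 hu.2).le
  have hNv0 : 0 < Nvc := by
    have hp : (0:ℝ) < (n:ℝ)^(k-1) := pow_pos hn0 _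
    rcases lt_or_ge 0 Nvc with h|h
    · exact h
    · exfalso
      have h9 : 2 * ((k.factorial:ℕ):ℝ) * Nvc ≤ 0 :=
        mul_nonpos_of_nonneg_of_nonpos (by positivity) h
      linarith only [hp, key, h9]
  have main : Nvc * (c * n) ≤ ((Finset.univ.filter (fun u => α * (n : ℝ) ^ (k - 1) ≤ ((((univ.powersetCard (k - 1)).filter (fun S => u ∉ S ∧ insert u S ∈ H)) ∩ Nv).card : ℝ))).card : ℝ) * Nvc
      + α * n * (2 * ((k.factorial:ℕ):ℝ) * Nvc) := by
    have h7 := mul_le_mul_of_nonneg_left key (show (0:ℝ) ≤ α * n by positivity)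
    have h6 : (n:ℝ) * (α * (n:ℝ)^(k-1)) ≤ α * n * (2 * ((k.factorial:ℕ):ℝ) * Nvc) := by
      calc (n:ℝ) * (α * (n:ℝ)^(k-1)) = α * n * ((n:ℝ)^(k-1)) := by ring
        _ ≤ α * n * (2 * ((k.factorial:ℕ):ℝ) * Nvc) := by
            refine h7.trans_eq ?_
            ring
    calc Nvc * (c * n) ≤ ∑ S ∈ Nv, ((H.filter (fun e => S ⊆ e)).card : ℝ) := hlow2
      _ = ∑ u : V, ((((univ.powersetCard (k - 1)).filter
            (fun S => u ∉ S ∧ insert u S ∈ H)) ∩ Nv).card : ℝ) := hcount.symm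
      _ ≤ ((Finset.univ.filter (fun u => α * (n : ℝ) ^ (k - 1) ≤ ((((univ.powersetCard (k - 1)).filter (fun S => u ∉ S ∧ insert u S ∈ H)) ∩ Nv).card : ℝ))).card : ℝ) * Nvc + (n:ℝ) * (α * (n:ℝ)^(k-1)) := hup
      _ ≤ _ := by linarith only [h6]
  exact auxfinal_7 c ((k.factorial:ℕ):ℝ) α (n:ℝ) Nvc _ hNv0 main
end

section
/- Let k ≥ 3, let P be a partition of a set V into d parts, and let L ⊆ ℤ^d be a full edge-lattice (generated by k-vectors, containing a full set of k-vectors, and transferral-free). Then the quotient group L_max^d / L has order d, where L_max^d = { x ∈ ℤ^d : k divides the sum of the coordinates of x }. -/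
/-- The lattice of all vectors in `ℤ^d` whose coordinate sum is divisible by `k`. -/
def Lmax (k d : ℕ) : AddSubgroup (Fin d → ℤ) where
  carrier := {x | (k : ℤ) ∣ ∑ i, x i}
  add_mem' := by
    intro a b ha hb
    simp only [Set.mem_setOf_eq] at *
    have h : ∑ i, (a + b) i = (∑ i, a i) + ∑ i, b i := by
      simp [Finset.sum_add_distrib]
    rw [h]
    exact dvd_add ha hb
  zero_mem' := by simp
  neg_mem' := by
    intro a ha
    simp only [Set.mem_setOf_eq] at *
    have h : ∑ i, (-a) i = -∑ i, a i := by simp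
    rw [h]
    exact dvd_neg.mpr ha



lemma single_nonneg' {d : ℕ} (i j : Fin d) : (0:ℤ) ≤ (Pi.single i 1 : Fin d → ℤ) j := by
  rcases eq_or_ne j i with rfl | h
  · simp
  · simp [Pi.single_eq_of_ne h]

lemma sum_single' {d : ℕ} (i : Fin d) : ∑ j, (Pi.single i 1 : Fin d → ℤ) j = 1 := by
  rw [Finset.sum_pi_single']; simp

lemma extract_vec (d : ℕ) (s : ℕ) : ∀ (a : Fin d → ℤ), (∀ i, 0 ≤ a i) → ((s:ℤ) ≤ ∑ i, a i) →
    ∃ w : Fin d → ℤ, (∀ i, 0 ≤ w i) ∧ (∀ i, w i ≤ a i) ∧ ∑ i, w i = (s:ℤ) := by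
  induction s with
  | zero => intro a ha _; exact ⟨0, by simp, fun i => ha i, by simp⟩
  | succ s ih =>
    intro a ha hs
    obtain ⟨w, hw0, hwa, hws⟩ := ih a ha (by push_cast at hs ⊢; omega)
    have : ∃ i, w i < a i := by
      by_contra h
      push_neg at h
      have : ∑ i, a i ≤ ∑ i, w i := Finset.sum_le_sum (fun i _ => h i)
      rw [hws] at this
      push_cast at hs
      omega
    obtain ⟨i, hi⟩ := this
    refine ⟨w + Pi.single i 1, ?_, ?_, ?_⟩
    · intro j
      have := single_nonneg' i j
      have := hw0 j; simp only [Pi.add_apply]; omega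
    · intro j
      rcases eq_or_ne j i with rfl | h
      · simp only [Pi.add_apply, Pi.single_eq_same]; omega
      · simp only [Pi.add_apply, Pi.single_eq_of_ne h]; have := hwa j; omega
    · simp only [Pi.add_apply]
      rw [Finset.sum_add_distrib, hws, Finset.sum_pi_single']
      simp only [Finset.mem_univ, if_true]
      push_cast; ring


set_option maxHeartbeats 2000000 in
/-- Lemma 6.4 of Keevash–Knox–Mycroft: a full edge-lattice `L ⊆ ℤ^d` has index `d`
in `L_max^d`. -/
theorem stmt_9 (k d : ℕ) (hk : 3 ≤ k) (hd : 1 ≤ d)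
    (L : AddSubgroup (Fin d → ℤ)) (I : Set (Fin d → ℤ))
    (hIvec : ∀ v ∈ I, (∀ i, 0 ≤ v i) ∧ ∑ i, v i = (k : ℤ))
    (hgen : L = AddSubgroup.closure I)
    (hfull : ∀ w : Fin d → ℤ, (∀ i, 0 ≤ w i) → (∑ i, w i = (k : ℤ) - 1) →
      ∃ i : Fin d, w + Pi.single i 1 ∈ I)
    (htf : ∀ i j : Fin d, i ≠ j → (Pi.single i (1 : ℤ) - Pi.single j 1) ∉ L) :
    Nat.card (↥(Lmax k d) ⧸ L.addSubgroupOf (Lmax k d)) = d := by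
  classical
  have hk3 : (3:ℤ) ≤ (k:ℤ) := by exact_mod_cast hk
  have hIL : I ⊆ (L : Set (Fin d → ℤ)) := by rw [hgen]; exact AddSubgroup.subset_closure
  set π : (Fin d → ℤ) →+ (Fin d → ℤ) ⧸ L := QuotientAddGroup.mk' L with hπ
  have hstep : ∀ v : Fin d → ℤ, (∀ i, 0 ≤ v i) → ∑ i, v i = (k:ℤ) - 1 →
      ∃ m, π v = - π (Pi.single m 1) := by
    intro v hv hs
    obtain ⟨m, hm⟩ := hfull v hv hs
    have : π (v + Pi.single m 1) = 0 := (QuotientAddGroup.eq_zero_iff _).mpr (hIL hm)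
    rw [map_add] at this
    exact ⟨m, eq_neg_of_add_eq_zero_left this⟩
  set i0 : Fin d := ⟨0, hd⟩ with hi0
  set c : Fin d → (Fin d → ℤ) ⧸ L := fun i => π (Pi.single i 1 - Pi.single i0 1) with hc
  have hcval : ∀ i, c i = π (Pi.single i 1) - π (Pi.single i0 1) := by
    intro i; rw [hc]; simp [map_sub]
  have hcinj : Function.Injective c := by
    intro i j hij
    by_contra hne
    apply htf i j hne
    have h0 : π (Pi.single i 1 - Pi.single j 1) = c i - c j := by
      rw [hcval, hcval, ← map_sub, ← map_sub, ← map_sub]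
      congr 1
      abel
    rw [hij, sub_self] at h0
    exact (QuotientAddGroup.eq_zero_iff _).mp h0
  -- auxiliary: construct a (k-1)-vector of the form s_i + s_j + (k-3)•s_{i0}
  have haux : ∀ (t : ℤ) (i j : Fin d), 0 ≤ t → t + 2 = (k:ℤ) - 1 →
      ∃ m, π (Pi.single i 1) + π (Pi.single j 1) + t • π (Pi.single i0 1)
            = - π (Pi.single m 1) := by
    intro t i j ht hts
    set v : Fin d → ℤ := Pi.single i 1 + Pi.single j 1 + t • Pi.single i0 1 with hv
    have hvn : ∀ s, 0 ≤ v s := by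
      intro s
      have h1 := single_nonneg' i s; have h2 := single_nonneg' j s
      have h3 := single_nonneg' i0 s
      simp only [hv, Pi.add_apply, Pi.smul_apply, smul_eq_mul]
      nlinarith
    have hvs : ∑ s, v s = (k:ℤ) - 1 := by
      simp only [hv, Pi.add_apply, Pi.smul_apply, smul_eq_mul]
      rw [Finset.sum_add_distrib, Finset.sum_add_distrib, ← Finset.mul_sum,
        sum_single', sum_single', sum_single']
      linarith
    obtain ⟨m, hm⟩ := hstep v hvn hvs
    rw [hv, map_add, map_add, map_zsmul] at hm
    exact ⟨m, hm⟩
  have hadd : ∀ i j : Fin d, ∃ m, c i + c j = c m := by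
    intro i j
    obtain ⟨m, A1⟩ := haux ((k:ℤ)-3) i j (by linarith) (by ring) 
    obtain ⟨n, A2⟩ := haux ((k:ℤ)-3) m i0 (by linarith) (by ring)
    -- A2 : P m + P i0 + (k-3) • P i0 = - P n
    refine ⟨n, ?_⟩
    rw [hcval, hcval, hcval]
    linear_combination (norm := module) A1 - A2
  -- the subgroup C
  have hzero : c i0 = 0 := by rw [hc]; simp
  have hneg : ∀ i, ∃ m, c m = - c i := by
    intro i
    set σ : Fin d → Fin d := fun j => Classical.choose (hadd i j) with hσ
    have hσspec : ∀ j, c i + c j = c (σ j) := fun j => Classical.choose_spec (hadd i j)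
    have hσinj : Function.Injective σ := by
      intro a b hab
      apply hcinj
      have := hσspec a
      rw [hab, ← hσspec b] at this
      exact add_left_cancel this
    obtain ⟨j, hj⟩ := (Finite.injective_iff_surjective.mp hσinj) i0
    refine ⟨j, ?_⟩
    have := hσspec j
    rw [hj, hzero] at this
    exact eq_neg_of_add_eq_zero_right this
  set Csub : AddSubgroup ((Fin d → ℤ) ⧸ L) :=
    { carrier := Set.range c
      add_mem' := by
        rintro x y ⟨i, rfl⟩ ⟨j, rfl⟩
        obtain ⟨m, hm⟩ := hadd i j
        exact ⟨m, hm.symm⟩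
      zero_mem' := ⟨i0, hzero⟩
      neg_mem' := by
        rintro x ⟨i, rfl⟩
        exact hneg i } with hCsub
  have hrange : (Csub : Set ((Fin d → ℤ) ⧸ L)) = Set.range c := rfl
  -- every nonneg vector with sum a multiple of k maps into Csub
  have hkvec : ∀ w : Fin d → ℤ, (∀ i, 0 ≤ w i) → ∑ i, w i = (k:ℤ) → π w ∈ Csub := by
    intro w hw hws
    have : ∃ i, 1 ≤ w i := by
      by_contra h
      push_neg at h
      have : ∑ i, w i ≤ ∑ i, (0:ℤ) := Finset.sum_le_sum (fun i _ => by have := h i; have := hw i; omega)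
      simp at this; omega
    obtain ⟨i, hi⟩ := this
    set v : Fin d → ℤ := w - Pi.single i 1 with hv
    have hvn : ∀ s, 0 ≤ v s := by
      intro s
      rcases eq_or_ne s i with rfl | h
      · simp only [hv, Pi.sub_apply, Pi.single_eq_same]; omega
      · simp only [hv, Pi.sub_apply, Pi.single_eq_of_ne h]; have := hw s; omega
    have hvs : ∑ s, v s = (k:ℤ) - 1 := by
      simp only [hv, Pi.sub_apply]
      rw [Finset.sum_sub_distrib, hws, sum_single']
    obtain ⟨m, hm⟩ := hstep v hvn hvs
    have : π w = c i - c m := by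
      have hw' : w = v + Pi.single i 1 := by rw [hv]; abel
      rw [hw', map_add, hm, hcval, hcval]
      abel
    rw [this]
    exact sub_mem ⟨i, rfl⟩ ⟨m, rfl⟩
  have key : ∀ N : ℕ, ∀ a : Fin d → ℤ, (∀ i, 0 ≤ a i) → ∑ i, a i = (k:ℤ) * N → π a ∈ Csub := by
    intro N
    induction N with
    | zero =>
      intro a ha hs
      have : a = 0 := by
        funext i
        have h1 : ∑ i, a i = 0 := by simpa using hs
        by_contra h
        have hpos : 0 < a i := lt_of_le_of_ne (ha i) (Ne.symm h)
        have : 0 < ∑ j, a j := Finset.sum_pos' (fun j _ => ha j) ⟨i, Finset.mem_univ i, hpos⟩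
        omega
      rw [this, map_zero]
      exact zero_mem _
    | succ N ih =>
      intro a ha hs
      have hge : (k:ℤ) ≤ ∑ i, a i := by
        rw [hs]; push_cast
        nlinarith [Nat.cast_nonneg (α := ℤ) N]
      obtain ⟨w, hw0, hwa, hws⟩ := extract_vec d k a ha hge
      have ha' : ∀ i, 0 ≤ (a - w) i := fun i => by simp only [Pi.sub_apply]; have := hwa i; omega
      have hs' : ∑ i, (a - w) i = (k:ℤ) * N := by
        simp only [Pi.sub_apply]
        rw [Finset.sum_sub_distrib, hs, hws]
        push_cast; ring
      have h1 : π a = π w + π (a - w) := by rw [← map_add]; congr 1; abel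
      rw [h1]
      exact add_mem (hkvec w hw0 hws) (ih (a - w) ha' hs')
  -- identify the quotient with the range of π restricted to Lmax
  set φ : ↥(Lmax k d) →+ (Fin d → ℤ) ⧸ L := π.comp (Lmax k d).subtype with hφ
  have hker : φ.ker = L.addSubgroupOf (Lmax k d) := by
    ext x
    simp only [hφ, AddMonoidHom.mem_ker, AddMonoidHom.coe_comp, Function.comp_apply,
      AddSubgroup.coe_subtype, AddSubgroup.mem_addSubgroupOf, hπ, QuotientAddGroup.mk'_apply]
    exact QuotientAddGroup.eq_zero_iff _
  have hrangeφ : φ.range = Csub := by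
    ext x
    constructor
    · rintro ⟨⟨y, hy⟩, rfl⟩
      -- hy : y ∈ Lmax, goal : π y ∈ Csub
      simp only [hφ, AddMonoidHom.coe_comp, Function.comp_apply, AddSubgroup.coe_subtype]
      obtain ⟨n, hn⟩ : (k:ℤ) ∣ ∑ i, y i := hy
      set t : ℕ := ∑ i, (y i).natAbs with ht
      set b : Fin d → ℤ := fun _ => ((k * t : ℕ) : ℤ) with hb
      have htle : ∀ i, (y i).natAbs ≤ t := by
        intro i
        exact Finset.single_le_sum (f := fun i => (y i).natAbs) (fun j _ => Nat.zero_le _) (Finset.mem_univ i)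
      have hbn : ∀ i, 0 ≤ b i := fun i => by positivity
      have hbs : ∑ i, b i = (k:ℤ) * ((t * d : ℕ) : ℤ) := by
        simp only [hb, Finset.sum_const, Finset.card_univ, Fintype.card_fin, nsmul_eq_mul]
        push_cast; ring
      have han : ∀ i, 0 ≤ (y + b) i := by
        intro i
        have h1 := htle i
        have h2 : ((y i).natAbs : ℤ) ≤ (t:ℤ) := by exact_mod_cast h1
        have h3 : (t:ℤ) ≤ ((k*t : ℕ):ℤ) := by push_cast; nlinarith [Nat.cast_nonneg (α := ℤ) t]
        simp only [Pi.add_apply, hb]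
        omega
      have hsumyb : ∑ i, (y + b) i = (k:ℤ) * (n + (t*d : ℕ)) := by
        simp only [Pi.add_apply]
        rw [Finset.sum_add_distrib, hn, hbs]
        ring
      have hNnonneg : 0 ≤ n + ((t*d : ℕ) : ℤ) := by
        have h0 : 0 ≤ ∑ i, (y + b) i := Finset.sum_nonneg (fun i _ => han i)
        rw [hsumyb] at h0
        nlinarith
      obtain ⟨N, hN⟩ : ∃ N : ℕ, (N : ℤ) = n + ((t*d:ℕ):ℤ) := ⟨(n + ((t*d:ℕ):ℤ)).toNat, Int.toNat_of_nonneg hNnonneg⟩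
      have hmem1 : π (y + b) ∈ Csub := key N (y + b) han (by rw [hsumyb, hN])
      have hmem2 : π b ∈ Csub := key (t*d) b hbn hbs
      have : π y = π (y + b) - π b := by rw [← map_sub]; congr 1; abel
      rw [this]
      exact sub_mem hmem1 hmem2
    · rintro ⟨i, rfl⟩
      have hmem : (Pi.single i 1 - Pi.single i0 1 : Fin d → ℤ) ∈ Lmax k d := by
        show (k:ℤ) ∣ ∑ j, (Pi.single i 1 - Pi.single i0 1 : Fin d → ℤ) j
        simp only [Pi.sub_apply]
        rw [Finset.sum_sub_distrib, sum_single', sum_single']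
        simp
      exact ⟨⟨_, hmem⟩, rfl⟩
  -- finish
  rw [← hker]
  have e := QuotientAddGroup.quotientKerEquivRange φ
  rw [Nat.card_congr e.toEquiv, hrangeφ]
  have : Nat.card Csub = Nat.card (Set.range c) := rfl
  rw [this, Nat.card_range_of_injective hcinj]
  simp
end

section
/- Let k = 4 and let P = {V₁, V₂, V₃} partition a vertex set V of size n divisible by 12, with |V₁| = n/3 − 2, |V₂| = n/3, |V₃| = n/3 + 2. Fix x ∈ V₂ and let H be the 4-graph whose edges are: all 4-sets e with i_P(e) ∈ {(3,0,1), (0,3,1), (0,0,4), (2,2,0), (1,1,2)}, together with all 4-sets e containing x with i_P(e) = (0,1,3). Then H has no perfect matching. -/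
/-- Construction 1.9 (k = 4) has no perfect matching. -/
theorem stmt_10 {V : Type*} [Fintype V] [DecidableEq V] (n : ℕ) (hn12 : 12 ∣ n)
    (hn : Fintype.card V = n) (V₁ V₂ V₃ : Finset V)
    (h12 : Disjoint V₁ V₂) (h13 : Disjoint V₁ V₃) (h23 : Disjoint V₂ V₃)
    (hcover : V₁ ∪ V₂ ∪ V₃ = Finset.univ)
    (hc1 : V₁.card = n / 3 - 2) (hc2 : V₂.card = n / 3) (hc3 : V₃.card = n / 3 + 2)
    (x : V) (hx : x ∈ V₂)
    (M : Finset (Finset V))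
    (hedge : ∀ e ∈ M, e.card = 4 ∧
      ((((e ∩ V₁).card, (e ∩ V₂).card, (e ∩ V₃).card) ∈
          ({(3,0,1), (0,3,1), (0,0,4), (2,2,0), (1,1,2)} : Set (ℕ × ℕ × ℕ))) ∨
        (x ∈ e ∧ ((e ∩ V₁).card, (e ∩ V₂).card, (e ∩ V₃).card) = (0,1,3))))
    (hdisj : (M : Set (Finset V)).Pairwise fun e f => Disjoint e f) :
    M.biUnion id ≠ Finset.univ := by
  intro hM
  have hnpos : 0 < n := hn ▸ Fintype.card_pos_iff.mpr ⟨x⟩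
  have hn12' : 12 ≤ n := Nat.le_of_dvd hnpos hn12
  have hm : 4 ≤ n / 3 := by omega
  -- partition sums
  have hsum : ∀ W : Finset V, ∑ e ∈ M, (e ∩ W).card = W.card := by
    intro W
    have h1 : M.biUnion (fun e => e ∩ W) = W := by
      ext v
      simp only [Finset.mem_biUnion]
      constructor
      · rintro ⟨e, _, hv⟩; exact (Finset.mem_inter.mp hv).2
      · intro hv
        have hv2 : v ∈ M.biUnion id := by rw [hM]; exact Finset.mem_univ v
        obtain ⟨e, he, hv'⟩ := Finset.mem_biUnion.mp hv2
        exact ⟨e, he, Finset.mem_inter.mpr ⟨hv', hv⟩⟩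
    have h2 : (M.biUnion (fun e => e ∩ W)).card = ∑ e ∈ M, (e ∩ W).card := by
      apply Finset.card_biUnion
      intro e he f hf hef
      exact Finset.disjoint_of_subset_left Finset.inter_subset_left
        (Finset.disjoint_of_subset_right Finset.inter_subset_left (hdisj he hf hef))
    rw [← h2, h1]
  set f : Finset V → ZMod 3 := fun e => ((e ∩ V₂).card : ZMod 3) - ((e ∩ V₁).card : ZMod 3)
    with hfdef
  have hfsum : ∑ e ∈ M, f e = 2 := by
    have h1 := hsum V₁
    have h2 := hsum V₂
    have hS : ∑ e ∈ M, f e = ((V₂.card : ZMod 3) - (V₁.card : ZMod 3)) := by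
      rw [hfdef, Finset.sum_sub_distrib, ← Nat.cast_sum, ← Nat.cast_sum, h1, h2]
    rw [hS, hc1, hc2, Nat.cast_sub (by omega : 2 ≤ n / 3)]
    push_cast
    ring
  -- per-edge values
  have hfe : ∀ e ∈ M, f e = 0 ∨ (f e = 1 ∧ x ∈ e) := by
    intro e he
    rcases (hedge e he).2 with h | ⟨hxe, h⟩
    · left
      simp only [Set.mem_insert_iff, Set.mem_singleton_iff, Prod.mk.injEq] at h
      rcases h with ⟨h1, h2, h3⟩ | ⟨h1, h2, h3⟩ | ⟨h1, h2, h3⟩ | ⟨h1, h2, h3⟩ | ⟨h1, h2, h3⟩ <;>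
        simp [hfdef, h1, h2] <;> decide
    · right
      simp only [Prod.mk.injEq] at h
      obtain ⟨h1, h2, h3⟩ := h
      refine ⟨?_, hxe⟩
      simp [hfdef, h1, h2]
  -- edges with nonzero f
  set t : Finset (Finset V) := M.filter (fun e => f e ≠ 0) with htdef
  have htsub : ∀ e ∈ t, x ∈ e ∧ f e = 1 := by
    intro e he
    rw [htdef, Finset.mem_filter] at he
    rcases hfe e he.1 with h0 | ⟨h1, hxe⟩
    · exact absurd h0 he.2
    · exact ⟨hxe, h1⟩
  have htcard : t.card ≤ 1 := by
    rw [Finset.card_le_one]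
    intro a ha b hb
    by_contra hab
    have hd := hdisj (Finset.mem_of_mem_filter a ha) (Finset.mem_of_mem_filter b hb) hab
    exact (Finset.disjoint_left.mp hd (htsub a ha).1) (htsub b hb).1
  have hsum2 : ∑ e ∈ M, f e = ∑ e ∈ t, f e := by
    rw [htdef]
    exact (Finset.sum_filter_ne_zero M).symm
  interval_cases h : t.card
  · rw [Finset.card_eq_zero.mp h] at hsum2
    simp at hsum2
    rw [hsum2] at hfsum
    exact absurd hfsum (by decide)
  · obtain ⟨e, he⟩ := Finset.card_eq_one.mp h
    have hmem : e ∈ t := by rw [he]; exact Finset.mem_singleton_self e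
    rw [he, Finset.sum_singleton, (htsub e hmem).2] at hsum2
    rw [hsum2] at hfsum
    exact absurd hfsum (by decide)
end

section
/- Suppose H is a k-graph on n vertices, n divisible by k, with vertex partition V = (A ∪ B) ∪ C where |A ∪ B| = n/k, C is an independent set, and δ_{k−1}(H) ≥ n/k. Then H contains a perfect matching. -/
/-!
Let `|Cᶜ| = m`, so `|C| = (k-1)m`. A `(k-1)`-set `T ⊆ C` lies only in edges `T ∪ {u}`, and
independence of `C` forces `u ∉ C`; since `T` lies in at least `m = |Cᶜ|` edges, every
`T ∪ {v}` with `v ∉ C` is an edge. A perfect matching is then built greedily, matching each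
vertex of `Cᶜ` with `k-1` unused vertices of `C`.
-/

namespace Finset

variable {V : Type*} [DecidableEq V]

def IsPerfectMatching (H M : Finset (Finset V)) (S : Finset V) : Prop :=
  M ⊆ H ∧ (M : Set (Finset V)).PairwiseDisjoint id ∧ M.biUnion id = S

lemma isPerfectMatching_empty (H : Finset (Finset V)) : IsPerfectMatching H ∅ ∅ := by
  simp [IsPerfectMatching]

lemma IsPerfectMatching.insert {H M : Finset (Finset V)} {S e : Finset V}
    (hM : IsPerfectMatching H M S) (he : e ∈ H) (heS : Disjoint e S) :
    IsPerfectMatching H (insert e M) (e ∪ S) := by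
  obtain ⟨hMH, hMdisj, hMS⟩ := hM
  refine ⟨insert_subset he hMH, ?_, by rw [biUnion_insert, hMS, id]⟩
  rw [coe_insert]
  refine hMdisj.insert fun f hf _ => heS.mono_right ?_
  rw [← hMS]
  exact subset_biUnion_of_mem id hf

lemma exists_isPerfectMatching_of_insert_mem {H : Finset (Finset V)} {k : ℕ} {D W : Finset V}
    (hDW : Disjoint D W) (hD : D.card = (k - 1) * W.card)
    (hedge : ∀ v ∈ W, ∀ T ⊆ D, T.card = k - 1 → insert v T ∈ H) :
    ∃ M, IsPerfectMatching H M (D ∪ W) := by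
  induction W using Finset.induction_on generalizing D with
  | empty =>
    rw [card_empty, mul_zero, card_eq_zero] at hD
    exact ⟨∅, by simpa [hD] using isPerfectMatching_empty H⟩
  | insert v W hvW ih =>
    rw [card_insert_of_notMem hvW, Nat.mul_succ] at hD
    obtain ⟨T, hTD, hT⟩ := exists_subset_card_eq (s := D) (n := k - 1) (by omega)
    have hvD : v ∉ D := disjoint_right.mp hDW (mem_insert_self v W)
    have hWD : Disjoint D W := disjoint_of_subset_right (subset_insert v W) hDW
    obtain ⟨M, hM⟩ := ih (D := D \ T) (disjoint_of_subset_left sdiff_subset hWD)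
      (by rw [card_sdiff_of_subset hTD, hD, hT, Nat.add_sub_cancel])
      (fun u hu T' hT'D => hedge u (mem_insert_of_mem hu) T' (hT'D.trans sdiff_subset))
    have hdisj : Disjoint (insert v T) (D \ T ∪ W) := by
      rw [disjoint_insert_left, disjoint_union_right]
      exact ⟨by simp [hvD, hvW], disjoint_sdiff, disjoint_of_subset_left hTD hWD⟩
    have hcover : insert v T ∪ (D \ T ∪ W) = D ∪ insert v W := by
      ext x
      simp only [mem_union, mem_insert, mem_sdiff]
      have := @hTD x
      tauto
    exact ⟨_, hcover ▸ hM.insert (hedge v (mem_insert_self v W) T hTD hT) hdisj⟩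

variable [Fintype V]

lemma filter_superset_subset_image_insert {H : Finset (Finset V)} {C T : Finset V}
    (hH : ∀ e ∈ H, e.card = T.card + 1) (hCind : ∀ e ∈ H, ¬ e ⊆ C) (hTC : T ⊆ C) :
    H.filter (T ⊆ ·) ⊆ Cᶜ.image (insert · T) := by
  intro e he
  rw [mem_filter] at he
  obtain ⟨u, -, rfl⟩ := exists_eq_insert_iff.mpr ⟨he.2, (hH e he.1).symm⟩
  exact mem_image_of_mem _ (mem_compl.mpr fun huC => hCind _ he.1 (insert_subset huC hTC))

lemma insert_mem_of_card_compl_le {H : Finset (Finset V)} {C T : Finset V}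
    (hH : ∀ e ∈ H, e.card = T.card + 1) (hCind : ∀ e ∈ H, ¬ e ⊆ C) (hTC : T ⊆ C)
    (hdeg : Cᶜ.card ≤ (H.filter (T ⊆ ·)).card) {v : V} (hv : v ∉ C) : insert v T ∈ H := by
  have hinj : Set.InjOn (insert · T) (↑Cᶜ : Set V) := fun a ha _ _ hab =>
    (insert_inj fun haT => (mem_compl.mp ha) (hTC haT)).mp hab
  have hlink : H.filter (T ⊆ ·) = Cᶜ.image (insert · T) :=
    eq_of_subset_of_card_le (filter_superset_subset_image_insert hH hCind hTC)
      (by rwa [card_image_of_injOn hinj])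
  have hvT : insert v T ∈ H.filter (T ⊆ ·) := hlink ▸ mem_image_of_mem _ (mem_compl.mpr hv)
  exact (mem_filter.mp hvT).1

end Finset

/-- The `i = 0` case of Lemma 4.3: if `C` is independent, `|V \ C| = n/k` and
`δ_{k-1}(H) ≥ n/k`, then `H` has a perfect matching. -/
theorem stmt_13 {V : Type*} [Fintype V] [DecidableEq V] (k n : ℕ) (hk : 0 < k) (hkn : k ∣ n)
    (hn : Fintype.card V = n)
    (H : Finset (Finset V)) (hH : ∀ e ∈ H, e.card = k)
    (C : Finset V) (hCind : ∀ e ∈ H, ¬ e ⊆ C)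
    (hAB : Cᶜ.card = n / k)
    (hdeg : ∀ S : Finset V, S.card = k - 1 → n / k ≤ (H.filter (fun e => S ⊆ e)).card) :
    ∃ M : Finset (Finset V), M ⊆ H ∧
      (M : Set (Finset V)).Pairwise (fun e f => Disjoint e f) ∧
      M.biUnion id = Finset.univ := by
  obtain ⟨m, rfl⟩ := hkn
  rw [Nat.mul_div_cancel_left m hk] at hAB hdeg
  have hC : C.card = (k - 1) * Cᶜ.card := by
    have := Finset.card_add_card_compl C
    rw [hn, hAB] at this
    rw [hAB, Nat.sub_mul, one_mul]
    omega
  have hedge : ∀ v ∈ Cᶜ, ∀ T ⊆ C, T.card = k - 1 → insert v T ∈ H := fun v hv T hTC hT =>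
    Finset.insert_mem_of_card_compl_le (fun e he => by rw [hH e he, hT]; omega) hCind hTC (hAB ▸ hdeg T hT)
      (Finset.mem_compl.mp hv)
  obtain ⟨M, hMH, hMdisj, hMV⟩ :=
    Finset.exists_isPerfectMatching_of_insert_mem disjoint_compl_right hC hedge
  exact ⟨M, hMH, hMdisj, by rw [hMV, Finset.union_compl]⟩
end

section
/- Let H be a k-graph on n vertices and P a partition of V(H) into d parts. For μ > 0, let I_P^μ(H) be the set of vectors i ∈ ℤ^d such that at least μ·n^k edges e of H satisfy i_P(e) = i, and let L_P^μ(H) be the subgroup of ℤ^d generated by I_P^μ(H). Given μ₀ > 0 and K = (k+1)^{d−1}, there exists μ with K^{−C(k+d−1,k)}·μ₀ ≤ μ ≤ μ₀ such that I_P^μ(H) = I_P^{μ/K}(H) (and hence L_P^μ(H) = L_P^{μ/K}(H)). -/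
/-- Index vector of a vertex subset with respect to a partition given by `f : V → Fin d`. -/
def idxVec {V : Type*} [DecidableEq V] {d : ℕ} (f : V → Fin d) (S : Finset V) : Fin d → ℤ :=
  fun j => ((S.filter (fun v => f v = j)).card : ℤ)

/-- `I_P^μ(H)`: index vectors realized by at least `μ·n^k` edges. -/
def robustI {V : Type*} [Fintype V] [DecidableEq V] {d : ℕ} (k : ℕ) (f : V → Fin d)
    (H : Finset (Finset V)) (μ : ℝ) : Set (Fin d → ℤ) :=
  {i | μ * (Fintype.card V : ℝ) ^ k ≤ ((H.filter (fun e => idxVec f e = i)).card : ℝ)}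

lemma card_piAntidiag_univ (d k : ℕ) :
    (Finset.piAntidiag (Finset.univ : Finset (Fin d)) k).card = (d + k - 1).choose k := by
  rw [← Finset.map_sym_eq_piAntidiag, Finset.card_map, Finset.sym_univ]
  simpa using Sym.card_sym_eq_choose (α := Fin d) k

/-- One can choose `μ` with `K^{-C(k+d-1,k)}·μ₀ ≤ μ ≤ μ₀`, `K = (k+1)^{d-1}`, so that
`I_P^μ(H) = I_P^{μ/K}(H)`. -/
theorem stmt_14 {V : Type*} [Fintype V] [DecidableEq V] (k d : ℕ) (hk : 0 < k) (hd : 0 < d)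
    (f : V → Fin d) (H : Finset (Finset V)) (hH : ∀ e ∈ H, e.card = k)
    (μ₀ : ℝ) (hμ₀ : 0 < μ₀) :
    ∃ μ : ℝ,
      μ₀ / (((k : ℝ) + 1) ^ (d - 1)) ^ ((k + d - 1).choose k) ≤ μ ∧ μ ≤ μ₀ ∧
      robustI k f H μ = robustI k f H (μ / (((k : ℝ) + 1) ^ (d - 1))) := by
  classical
  set K : ℝ := ((k : ℝ) + 1) ^ (d - 1) with hKdef
  have hk1 : (1 : ℝ) ≤ (k : ℝ) + 1 := le_add_of_nonneg_left (Nat.cast_nonneg k)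
  have hK1 : 1 ≤ K := one_le_pow₀ hk1
  have hK0 : 0 < K := lt_of_lt_of_le one_pos hK1
  set N := (k + d - 1).choose k with hN
  have hmono : ∀ m m' : ℕ, m ≤ m' →
      robustI k f H (μ₀ / K ^ m) ⊆ robustI k f H (μ₀ / K ^ m') := by
    intro m m' h i hi
    have h1 : μ₀ / K ^ m' ≤ μ₀ / K ^ m := by
      apply div_le_div_of_nonneg_left hμ₀.le (pow_pos hK0 m) (pow_le_pow_right₀ hK1 h)
    exact le_trans (mul_le_mul_of_nonneg_right h1 (by positivity)) hi
  have key : ∃ m ≤ N, robustI k f H (μ₀ / K ^ m) = robustI k f H (μ₀ / K ^ (m + 1)) := by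
    rcases Nat.eq_zero_or_pos (Fintype.card V) with hn | hn
    · refine ⟨0, Nat.zero_le _, ?_⟩
      have hzero : ((Fintype.card V : ℝ)) ^ k = 0 := by
        rw [hn]; simp [zero_pow hk.ne']
      ext i
      simp [robustI, hzero]
    by_contra hcon
    push_neg at hcon
    set T : Finset (Fin d → ℤ) := H.image (idxVec f) with hT
    have hTcard : T.card ≤ N := by
      have hsub : T ⊆ (Finset.piAntidiag (Finset.univ : Finset (Fin d)) k).image
          (fun w : Fin d → ℕ => fun j => (w j : ℤ)) := by
        intro i hi
        obtain ⟨e, he, rfl⟩ := Finset.mem_image.mp hi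
        refine Finset.mem_image.mpr ⟨fun j => (e.filter (fun v => f v = j)).card, ?_, rfl⟩
        rw [Finset.mem_piAntidiag]
        refine ⟨?_, fun j _ => Finset.mem_univ j⟩
        rw [← hH e he]
        exact (Finset.card_eq_sum_card_fiberwise (fun v _ => Finset.mem_univ (f v))).symm
      calc T.card ≤ _ := Finset.card_le_card hsub
        _ ≤ (Finset.piAntidiag (Finset.univ : Finset (Fin d)) k).card :=
          Finset.card_image_le
        _ = (d + k - 1).choose k := card_piAntidiag_univ d k
        _ = N := by rw [hN, Nat.add_comm k d]
    have hSubT : ∀ m : ℕ, robustI k f H (μ₀ / K ^ m) ⊆ ↑T := by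
      intro m i hi
      have hμ : 0 < μ₀ / K ^ m := div_pos hμ₀ (pow_pos hK0 m)
      have hpos : (0 : ℝ) < (μ₀ / K ^ m) * (Fintype.card V : ℝ) ^ k := by
        apply mul_pos hμ
        positivity
      have hcard : (0 : ℝ) < ((H.filter (fun e => idxVec f e = i)).card : ℝ) :=
        lt_of_lt_of_le hpos hi
      have : (H.filter (fun e => idxVec f e = i)).Nonempty := by
        rw [← Finset.card_pos]
        exact_mod_cast hcard
      obtain ⟨e, he⟩ := this
      rw [Finset.mem_filter] at he
      exact Finset.mem_coe.mpr (Finset.mem_image.mpr ⟨e, he.1, he.2⟩)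
    set Sf : ℕ → Finset (Fin d → ℤ) :=
      fun m => T.filter (fun i => i ∈ robustI k f H (μ₀ / K ^ m)) with hSf
    have hSfmono : ∀ m ≤ N, Sf m ⊂ Sf (m + 1) := by
      intro m hm
      constructor
      · intro i hi
        rw [Finset.mem_filter] at hi ⊢
        exact ⟨hi.1, hmono m (m+1) (Nat.le_succ m) hi.2⟩
      · intro hcontra
        apply hcon m hm
        apply Set.Subset.antisymm (hmono m (m+1) (Nat.le_succ m))
        intro i hi
        have hiT : i ∈ T := hSubT (m+1) hi
        have : i ∈ Sf (m + 1) := Finset.mem_filter.mpr ⟨hiT, hi⟩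
        exact (Finset.mem_filter.mp (hcontra this)).2
    have hchain : ∀ m, m ≤ N + 1 → m ≤ (Sf m).card := by
      intro m
      induction m with
      | zero => intro _; exact Nat.zero_le _
      | succ m ih =>
        intro hm
        have h1 := ih (Nat.le_of_succ_le hm)
        have h2 : (Sf m).card < (Sf (m + 1)).card :=
          Finset.card_lt_card (hSfmono m (Nat.lt_succ_iff.mp hm))
        omega
    have hfin : N + 1 ≤ (Sf (N + 1)).card := hchain (N + 1) le_rfl
    have : (Sf (N + 1)).card ≤ T.card := Finset.card_le_card (Finset.filter_subset _ _)
    omega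
  obtain ⟨m, hm, heq⟩ := key
  refine ⟨μ₀ / K ^ m, ?_, ?_, ?_⟩
  · apply div_le_div_of_nonneg_left hμ₀.le (pow_pos hK0 m) (pow_le_pow_right₀ hK1 hm)
  · exact div_le_self hμ₀.le (one_le_pow₀ hK1)
  · rw [div_div, ← pow_succ]
    exact heq
end

section
/- Let H be a k-graph on n vertices with an independent set C such that |C| ≥ (1−ε)·(k−1)n/k and δ_{k−1}(H) ≥ n/k, where C is a maximum independent set. Define A = { x ∈ V \ C : deg(x, C) ≥ (1−α)·C(|C|, k−1) } and B = V \ (A ∪ C), with α = ε^{1/3} and ε sufficiently small. Then |B| ≤ α²·n and |A| ≥ n/k − α²·n, and (1−ε)(k−1)n/k ≤ |C| ≤ (k−1)n/k. -/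
lemma aux_surj {V : Type} [DecidableEq V] [Fintype V]
    (H : Finset (Finset V)) (k : ℕ) (hk : 1 ≤ k) (hH : ∀ e ∈ H, e.card = k)
    (C : Finset V) (hind : ∀ e ∈ H, ¬ e ⊆ C)
    (S : Finset V) (hSC : S ⊆ C) (hScard : S.card = k - 1) :
    (H.filter (fun e => S ⊆ e)).card ≤ (Cᶜ.filter (fun x => insert x S ∈ H)).card := by
  apply Finset.card_le_card_of_surjOn (fun x => insert x S)
  intro e he
  simp only [Finset.coe_filter, Set.mem_setOf_eq] at he
  obtain ⟨heH, hSe⟩ := he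
  have hcard : (e \ S).card = 1 := by
    rw [Finset.card_sdiff_of_subset hSe, hH e heH, hScard]
    omega
  obtain ⟨x, hx⟩ := Finset.card_eq_one.mp hcard
  have hins : insert x S = e := by
    rw [Finset.insert_eq, ← hx, Finset.sdiff_union_of_subset hSe]
  have hxC : x ∉ C := by
    intro hxC
    exact hind e heH (hins ▸ Finset.insert_subset hxC hSC)
  refine ⟨x, ?_, hins⟩
  simp only [Finset.coe_filter, Set.mem_setOf_eq, Finset.mem_compl]
  exact ⟨hxC, hins.symm ▸ heH⟩

set_option maxHeartbeats 1000000 in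
/-- Claim 4.4: bounds on the sizes of the parts `A`, `B`, `C` in the extremal case. -/
theorem stmt_16 (k : ℕ) (hk : 3 ≤ k) :
    ∃ ε₀ : ℝ, 0 < ε₀ ∧ ∀ ε : ℝ, 0 < ε → ε ≤ ε₀ →
      ∃ n₀ : ℕ, ∀ (V : Type) [Fintype V] [DecidableEq V], ∀ n : ℕ, n₀ ≤ n →
        Fintype.card V = n →
        ∀ H : Finset (Finset V), (∀ e ∈ H, e.card = k) →
        ∀ C : Finset V,
          (∀ e ∈ H, ¬ e ⊆ C) →
          (∀ C' : Finset V, (∀ e ∈ H, ¬ e ⊆ C') → C'.card ≤ C.card) →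
          (1 - ε) * (((k : ℝ) - 1) * n / k) ≤ (C.card : ℝ) →
          (∀ S : Finset V, S.card = k - 1 →
            (n : ℝ) / k ≤ ((H.filter (fun e => S ⊆ e)).card : ℝ)) →
          (let α : ℝ := ε ^ ((1 : ℝ) / 3)
           let A : Finset V := Cᶜ.filter (fun x =>
             (1 - α) * ((C.card.choose (k - 1) : ℝ)) ≤
               (((C.powersetCard (k - 1)).filter (fun S => insert x S ∈ H)).card : ℝ))
           let B : Finset V := Cᶜ \ A
           (B.card : ℝ) ≤ α ^ 2 * n ∧
             (n : ℝ) / k - α ^ 2 * n ≤ (A.card : ℝ) ∧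
             (1 - ε) * (((k : ℝ) - 1) * n / k) ≤ (C.card : ℝ) ∧
             (C.card : ℝ) ≤ ((k : ℝ) - 1) * n / k) := by
  refine ⟨1/2, by norm_num, ?_⟩
  intro ε hε hε'
  refine ⟨2 * k, ?_⟩
  intro V _ _ n hn hVn H hH C hind _hmax hClow hdeg
  intro α A B
  have hk1 : (1:ℕ) ≤ k := by omega
  have hkR : (0:ℝ) < (k:ℝ) := by positivity
  have hnR : (0:ℝ) ≤ (n:ℝ) := Nat.cast_nonneg n
  have hn2k : (2 * k : ℝ) ≤ n := by exact_mod_cast hn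
  -- |C| ≥ k - 1
  have hCk1R : ((k:ℝ) - 1) ≤ (C.card : ℝ) := by
    have h1 : (1 - ε) ≥ 1/2 := by linarith
    have h2 : ((k:ℝ) - 1) * n / k ≥ ((k:ℝ) - 1) * 2 := by
      rw [ge_iff_le, le_div_iff₀ hkR]
      have : (0:ℝ) ≤ (k:ℝ) - 1 := by
        have : (3:ℝ) ≤ (k:ℝ) := by exact_mod_cast hk
        linarith
      nlinarith
    have h3 : (0:ℝ) ≤ ((k:ℝ) - 1) * n / k := by
      have h3k : (3:ℝ) ≤ (k:ℝ) := by exact_mod_cast hk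
      apply div_nonneg _ hkR.le
      nlinarith
    nlinarith [hClow]
  have hCk1 : k - 1 ≤ C.card := by
    have h3 : (3:ℝ) ≤ (k:ℝ) := by exact_mod_cast hk
    have : ((k - 1 : ℕ) : ℝ) ≤ (C.card : ℝ) := by
      have : ((k - 1 : ℕ) : ℝ) = (k:ℝ) - 1 := by
        have := Nat.cast_sub hk1 (R := ℝ)
        simpa using this
      rw [this]; exact hCk1R
    exact_mod_cast this
  -- C.card ≤ n
  have hCn : C.card ≤ n := by
    rw [← hVn]; exact Finset.card_le_univ C
  have hCcompl : (Cᶜ.card : ℝ) = (n:ℝ) - C.card := by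
    rw [Finset.card_compl, hVn, Nat.cast_sub hCn]
  -- Upper bound on |C|
  have hCupper : (C.card : ℝ) ≤ ((k:ℝ) - 1) * n / k := by
    obtain ⟨S, hSC, hScard⟩ := Finset.exists_subset_card_eq hCk1
    have h1 := hdeg S hScard
    have h2 := aux_surj H k hk1 hH C hind S hSC hScard
    have h3 : (Cᶜ.filter (fun x => insert x S ∈ H)).card ≤ Cᶜ.card :=
      Finset.card_filter_le _ _
    have h4 : (n:ℝ) / k ≤ (n:ℝ) - C.card := by
      rw [← hCcompl]
      calc (n:ℝ)/k ≤ ((H.filter (fun e => S ⊆ e)).card : ℝ) := h1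
        _ ≤ (Cᶜ.card : ℝ) := by exact_mod_cast le_trans h2 h3
    rw [div_le_iff₀ hkR] at h4
    rw [le_div_iff₀ hkR]
    nlinarith
  -- abbreviations
  set m : ℕ := C.card.choose (k - 1) with hm
  have hmpos : 0 < m := Nat.choose_pos hCk1
  have hmR : (0:ℝ) < (m:ℝ) := by exact_mod_cast hmpos
  set pow : Finset (Finset V) := C.powersetCard (k - 1) with hpow
  have hpowcard : pow.card = m := Finset.card_powersetCard _ _
  -- double counting
  have hsum_comm : ∑ S ∈ pow, ((Cᶜ.filter (fun x => insert x S ∈ H)).card : ℝ)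
      = ∑ x ∈ Cᶜ, ((pow.filter (fun S => insert x S ∈ H)).card : ℝ) := by
    simp only [Finset.card_filter]
    push_cast
    rw [Finset.sum_comm]
  have hlower : (m:ℝ) * ((n:ℝ)/k) ≤ ∑ x ∈ Cᶜ, ((pow.filter (fun S => insert x S ∈ H)).card : ℝ) := by
    rw [← hsum_comm]
    calc (m:ℝ) * ((n:ℝ)/k) = ∑ _S ∈ pow, ((n:ℝ)/k) := by
          rw [Finset.sum_const, hpowcard, nsmul_eq_mul]
      _ ≤ ∑ S ∈ pow, ((Cᶜ.filter (fun x => insert x S ∈ H)).card : ℝ) := by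
          apply Finset.sum_le_sum
          intro S hS
          rw [Finset.mem_powersetCard] at hS
          calc (n:ℝ)/k ≤ ((H.filter (fun e => S ⊆ e)).card : ℝ) := hdeg S hS.2
            _ ≤ _ := by exact_mod_cast aux_surj H k hk1 hH C hind S hS.1 hS.2
  -- A ∪ B = Cᶜ, disjoint
  have hAsub : A ⊆ Cᶜ := Finset.filter_subset _ _
  have hBcard : A.card + B.card = Cᶜ.card := by
    have : B.card = Cᶜ.card - A.card := Finset.card_sdiff_of_subset hAsub
    have hA : A.card ≤ Cᶜ.card := Finset.card_le_card hAsub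
    omega
  have hunion : Cᶜ = A ∪ B := by
    simp only [B, Finset.union_sdiff_self_eq_union]
    rw [Finset.union_eq_right.mpr hAsub]
  have hdisj : Disjoint A B := Finset.disjoint_sdiff
  -- upper bound on the sum
  have hupper : ∑ x ∈ Cᶜ, ((pow.filter (fun S => insert x S ∈ H)).card : ℝ)
      ≤ (A.card : ℝ) * m + (B.card : ℝ) * ((1 - α) * m) := by
    rw [hunion, Finset.sum_union hdisj]
    apply add_le_add
    · calc ∑ x ∈ A, ((pow.filter (fun S => insert x S ∈ H)).card : ℝ)
          ≤ ∑ _x ∈ A, (m:ℝ) := by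
            apply Finset.sum_le_sum
            intro x _
            have : (pow.filter (fun S => insert x S ∈ H)).card ≤ pow.card :=
              Finset.card_filter_le _ _
            rw [hpowcard] at this
            exact_mod_cast this
        _ = (A.card : ℝ) * m := by rw [Finset.sum_const, nsmul_eq_mul]
    · calc ∑ x ∈ B, ((pow.filter (fun S => insert x S ∈ H)).card : ℝ)
          ≤ ∑ _x ∈ B, ((1 - α) * m) := by
            apply Finset.sum_le_sum
            intro x hx
            simp only [B, Finset.mem_sdiff, A, Finset.mem_filter, not_and] at hx
            have := hx.2 hx.1
            push_neg at this
            exact this.le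
        _ = (B.card : ℝ) * ((1 - α) * m) := by rw [Finset.sum_const, nsmul_eq_mul]
  -- derive n/k ≤ |A| + (1-α)|B|
  have hkey : (n:ℝ)/k ≤ (A.card : ℝ) + (1 - α) * B.card := by
    have h := le_trans hlower hupper
    have h2 : (m:ℝ) * ((n:ℝ)/k) ≤ (m:ℝ) * ((A.card:ℝ) + (1 - α) * B.card) := by
      nlinarith
    exact le_of_mul_le_mul_left h2 hmR
  -- rpow facts
  have hα : 0 < α := Real.rpow_pos_of_pos hε _
  have hcube : α * α ^ 2 = ε := by
    have : α ^ (3:ℕ) = ε := by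
      rw [show α = ε ^ ((1:ℝ)/3) from rfl, ← Real.rpow_natCast (ε ^ ((1:ℝ)/3)) 3,
        ← Real.rpow_mul hε.le]
      norm_num
    nlinarith [this]
  -- α |B| ≤ ε n
  have hsumAB : (A.card : ℝ) + (B.card : ℝ) = (n:ℝ) - C.card := by
    rw [← hCcompl]; exact_mod_cast hBcard
  have hαB : α * B.card ≤ ε * n := by
    have h1 : (n:ℝ) - C.card ≤ (n:ℝ)/k + ε * (((k:ℝ)-1) * n / k) := by
      have : (n:ℝ) - (1 - ε) * (((k:ℝ)-1) * n / k) ≤ (n:ℝ)/k + ε * (((k:ℝ)-1) * n / k) := by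
        have hexp : (n:ℝ) - (((k:ℝ)-1) * n / k) = (n:ℝ)/k := by
          field_simp; ring
        nlinarith [hexp]
      linarith [hClow]
    have h2 : ε * (((k:ℝ)-1) * n / k) ≤ ε * n := by
      have : ((k:ℝ)-1) * n / k ≤ n := by
        rw [div_le_iff₀ hkR]
        nlinarith
      nlinarith
    nlinarith [hkey, hsumAB]
  have hBbound : (B.card : ℝ) ≤ α ^ 2 * n := by
    have : α * (B.card : ℝ) ≤ α * (α ^ 2 * n) := by
      rw [← mul_assoc, hcube]; exact hαB
    exact le_of_mul_le_mul_left this hα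
  refine ⟨hBbound, ?_, hClow, hCupper⟩
  -- |A| ≥ n/k - α² n
  have hexp : (n:ℝ)/k + (((k:ℝ)-1) * n / k) = n := by
    field_simp; ring
  have h1 : (n:ℝ)/k ≤ (n:ℝ) - C.card := by linarith [hCupper]
  linarith [hsumAB, hBbound, h1]
end

section
/- Let H be a k-graph on n vertices (n divisible by k) with δ_{k−1}(H) ≥ n/k, and suppose P = {X, Y} is a bipartition of V(H) such that every edge of H intersects X in an odd number of vertices. Then for every even a with 0 ≤ a ≤ k−1 there exists an edge e with |e ∩ X| = a + 1, i.e., the lattice L_P(H) generated by index vectors of edges equals L_odd. -/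
/-- If all edges meet `X` oddly and `δ_{k-1}(H) ≥ n/k`, then for every even `a ≤ k-1`
there is an edge with `|e ∩ X| = a + 1`; hence `L_P(H) = L_odd`. -/
theorem stmt_18 {V : Type*} [Fintype V] [DecidableEq V] (k n : ℕ) (hk : 0 < k) (hkn : k ∣ n)
    (hn : Fintype.card V = n) (H : Finset (Finset V)) (hH : ∀ e ∈ H, e.card = k)
    (X : Finset V) (hX : k ≤ X.card) (hY : k ≤ Xᶜ.card)
    (hodd : ∀ e ∈ H, Odd (e ∩ X).card)
    (hdeg : ∀ S : Finset V, S.card = k - 1 → n / k ≤ (H.filter (fun e => S ⊆ e)).card) :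
    (∀ a : ℕ, Even a → a ≤ k - 1 → ∃ e ∈ H, (e ∩ X).card = a + 1) ∧
      AddSubgroup.closure
          {p : ℤ × ℤ | ∃ e ∈ H, p = (((e ∩ X).card : ℤ), ((e ∩ Xᶜ).card : ℤ))} =
        Lodd k := by
  -- basic card fact
  have hsplit : ∀ e ∈ H, (e ∩ X).card + (e ∩ Xᶜ).card = k := by
    intro e he
    have h1 : e ∩ Xᶜ = e \ X := by
      ext x; simp [Finset.mem_sdiff]
    rw [h1, Finset.card_inter_add_card_sdiff, hH e he]
  have hnk : k ≤ n := by
    have := Finset.card_le_univ X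
    omega
  have hdiv : 1 ≤ n / k := (Nat.one_le_div_iff hk).mpr hnk
  have main : ∀ a : ℕ, Even a → a ≤ k - 1 → ∃ e ∈ H, (e ∩ X).card = a + 1 := by
    intro a ha hak
    obtain ⟨A, hAX, hA⟩ := Finset.exists_subset_card_eq (s := X) (n := a) (by omega)
    obtain ⟨B, hBX, hB⟩ := Finset.exists_subset_card_eq (s := Xᶜ) (n := k - 1 - a) (by omega)
    have hdisj : Disjoint A B := by
      refine Finset.disjoint_left.mpr ?_
      intro x hxA hxB
      have := hAX hxA
      have := hBX hxB
      simp_all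
    set S := A ∪ B with hS
    have hScard : S.card = k - 1 := by
      rw [hS, Finset.card_union_of_disjoint hdisj, hA, hB]; omega
    have := hdeg S hScard
    have hne : (H.filter (fun e => S ⊆ e)).Nonempty := by
      rw [← Finset.card_pos]; omega
    obtain ⟨e, he⟩ := hne
    rw [Finset.mem_filter] at he
    obtain ⟨heH, hSe⟩ := he
    refine ⟨e, heH, ?_⟩
    have hAe : A ⊆ e ∩ X := Finset.subset_inter (fun x hx => hSe (Finset.mem_union_left _ hx)) hAX
    have hBe : B ⊆ e ∩ Xᶜ := Finset.subset_inter (fun x hx => hSe (Finset.mem_union_right _ hx)) hBX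
    have h1 : a ≤ (e ∩ X).card := hA ▸ Finset.card_le_card hAe
    have h2 : k - 1 - a ≤ (e ∩ Xᶜ).card := hB ▸ Finset.card_le_card hBe
    have h3 := hsplit e heH
    have h4 := hodd e heH
    rw [Nat.odd_iff] at h4
    rw [Nat.even_iff] at ha
    omega
  refine ⟨main, le_antisymm ?_ ?_⟩
  · rw [AddSubgroup.closure_le]
    rintro p ⟨e, he, rfl⟩
    refine AddSubgroup.subset_closure ⟨(e ∩ X).card, ?_, hodd e he, ?_⟩
    · have := hsplit e he; omega
    · have := hsplit e he
      have : ((e ∩ Xᶜ).card : ℤ) = (k : ℤ) - (e ∩ X).card := by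
        have h := hsplit e he; push_cast [← h]; ring
      simp [this]
  · rw [Lodd, AddSubgroup.closure_le]
    rintro p ⟨a, hak, ha, rfl⟩
    obtain ⟨b, rfl⟩ := ha
    have hb : Even (2 * b) := even_two_mul b
    obtain ⟨e, he, hcard⟩ := main (2 * b) hb (by omega)
    refine AddSubgroup.subset_closure ⟨e, he, ?_⟩
    have h := hsplit e he
    have : ((e ∩ Xᶜ).card : ℤ) = (k : ℤ) - (2 * b + 1 : ℕ) := by
      push_cast [← h, hcard]; ring
    simp [hcard, this]
end
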